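/- arXiv:2411.04102 — 2 statements merged into one kernel-verified Lean document; each statement's English description precedes it below -/
import Mathlib

section
/- Let R and S be associative unital k-algebras and let τ : S ⊗ R → R ⊗ S be a bijective k-linear map satisfying τ(1_S ⊗ r) = r ⊗ 1_S, τ(s ⊗ 1_R) = 1_R ⊗ s, and τ ∘ (m_S ⊗ m_R) = (m_R ⊗ m_S) ∘ (1 ⊗ τ ⊗ 1) ∘ (τ ⊗ τ) ∘ (1 ⊗ τ ⊗ 1). Then the multiplication on R ⊗ S defined by (m_R ⊗ m_S) ∘ (1_R ⊗ τ ⊗ 1_S) is associative with unit 1_R ⊗ 1_S, making R ⊗_τ S an associative unital k-algebra. -/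
open TensorProduct LinearMap

variable (k : Type*) [Field k]
variable (R S : Type*) [Ring R] [Ring S] [Algebra k R] [Algebra k S]

/-- The right-hand side of the twisting-map compatibility condition:
`(m_R ⊗ m_S) ∘ (1 ⊗ τ ⊗ 1) ∘ (τ ⊗ τ) ∘ (1 ⊗ τ ⊗ 1)` as a linear map
`(S ⊗ S) ⊗ (R ⊗ R) → R ⊗ S`. -/
noncomputable def twistRHS (τ : S ⊗[k] R →ₗ[k] R ⊗[k] S) :
    (S ⊗[k] S) ⊗[k] (R ⊗[k] R) →ₗ[k] R ⊗[k] S :=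
  TensorProduct.map (LinearMap.mul' k R) (LinearMap.mul' k S)
    ∘ₗ (TensorProduct.assoc k R R (S ⊗[k] S)).symm.toLinearMap
    ∘ₗ lTensor R (TensorProduct.assoc k R S S).toLinearMap
    ∘ₗ lTensor R (rTensor S τ)
    ∘ₗ lTensor R (TensorProduct.assoc k S R S).symm.toLinearMap
    ∘ₗ (TensorProduct.assoc k R S (R ⊗[k] S)).toLinearMap
    ∘ₗ TensorProduct.map τ τ
    ∘ₗ (TensorProduct.assoc k S R (S ⊗[k] R)).symm.toLinearMap
    ∘ₗ lTensor S (TensorProduct.assoc k R S R).toLinearMap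
    ∘ₗ lTensor S (rTensor R τ)
    ∘ₗ lTensor S (TensorProduct.assoc k S R R).symm.toLinearMap
    ∘ₗ (TensorProduct.assoc k S S (R ⊗[k] R)).toLinearMap

/-- `τ : S ⊗ R → R ⊗ S` is a twisting map. -/
noncomputable def IsTwistingMap (τ : S ⊗[k] R →ₗ[k] R ⊗[k] S) : Prop :=
  Function.Bijective τ ∧
  (∀ r : R, τ ((1 : S) ⊗ₜ[k] r) = r ⊗ₜ[k] (1 : S)) ∧
  (∀ s : S, τ (s ⊗ₜ[k] (1 : R)) = (1 : R) ⊗ₜ[k] s) ∧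
  τ ∘ₗ TensorProduct.map (LinearMap.mul' k S) (LinearMap.mul' k R) = twistRHS k R S τ

/-- The multiplication `(m_R ⊗ m_S) ∘ (1_R ⊗ τ ⊗ 1_S)` on `R ⊗ S`
determined by the twisting map `τ`. -/
noncomputable def ttMul (τ : S ⊗[k] R →ₗ[k] R ⊗[k] S) :
    (R ⊗[k] S) ⊗[k] (R ⊗[k] S) →ₗ[k] R ⊗[k] S :=
  TensorProduct.map (LinearMap.mul' k R) (LinearMap.mul' k S)
    ∘ₗ (TensorProduct.assoc k R R (S ⊗[k] S)).symm.toLinearMap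
    ∘ₗ lTensor R (TensorProduct.assoc k R S S).toLinearMap
    ∘ₗ lTensor R (rTensor S τ)
    ∘ₗ lTensor R (TensorProduct.assoc k S R S).symm.toLinearMap
    ∘ₗ (TensorProduct.assoc k R S (R ⊗[k] S)).toLinearMap


section TwistAux
set_option synthInstance.maxHeartbeats 1000000
set_option maxHeartbeats 1000000

variable (τ : S ⊗[k] R →ₗ[k] R ⊗[k] S)

lemma ttMul_tmul (r r' : R) (s s' : S) :
    ttMul k R S τ ((r ⊗ₜ[k] s) ⊗ₜ[k] (r' ⊗ₜ[k] s')) =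
      TensorProduct.map (LinearMap.mulLeft k r) (LinearMap.mulRight k s') (τ (s ⊗ₜ[k] r')) := by
  simp only [ttMul, coe_comp, Function.comp_apply, LinearEquiv.coe_coe, assoc_tmul,
    lTensor_tmul, assoc_symm_tmul, rTensor_tmul]
  induction τ (s ⊗ₜ[k] r') using TensorProduct.induction_on with
  | zero => simp
  | tmul a b => simp [mul'_apply, mulLeft_apply, mulRight_apply]
  | add x y hx hy => simp_all [tmul_add, add_tmul]

lemma ttMul_one_left (h1 : ∀ r : R, τ ((1 : S) ⊗ₜ[k] r) = r ⊗ₜ[k] (1 : S)) (a : R)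
    (z : R ⊗[k] S) :
    ttMul k R S τ ((a ⊗ₜ[k] (1 : S)) ⊗ₜ[k] z) =
      TensorProduct.map (LinearMap.mulLeft k a) LinearMap.id z := by
  induction z using TensorProduct.induction_on with
  | zero => simp
  | tmul e f => rw [ttMul_tmul, h1]; simp [mulLeft_apply, mulRight_apply]
  | add x y hx hy => simp_all [tmul_add]

lemma ttMul_one_right (h2 : ∀ s : S, τ (s ⊗ₜ[k] (1 : R)) = (1 : R) ⊗ₜ[k] s) (d : S)
    (z : R ⊗[k] S) :
    ttMul k R S τ (z ⊗ₜ[k] ((1 : R) ⊗ₜ[k] d)) =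
      TensorProduct.map LinearMap.id (LinearMap.mulRight k d) z := by
  induction z using TensorProduct.induction_on with
  | zero => simp
  | tmul e f => rw [ttMul_tmul, h2]; simp [mulLeft_apply, mulRight_apply]
  | add x y hx hy => simp_all [add_tmul]

lemma twistRHS_eq : twistRHS k R S τ = ttMul k R S τ
    ∘ₗ TensorProduct.map τ τ
    ∘ₗ (TensorProduct.assoc k S R (S ⊗[k] R)).symm.toLinearMap
    ∘ₗ lTensor S (TensorProduct.assoc k R S R).toLinearMap
    ∘ₗ lTensor S (rTensor R τ)
    ∘ₗ lTensor S (TensorProduct.assoc k S R R).symm.toLinearMap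
    ∘ₗ (TensorProduct.assoc k S S (R ⊗[k] R)).toLinearMap := rfl

lemma ctau (hc : τ ∘ₗ TensorProduct.map (LinearMap.mul' k S) (LinearMap.mul' k R) = twistRHS k R S τ)
    (s₁ s₂ : S) (r₁ r₂ : R) :
    τ ((s₁ * s₂) ⊗ₜ[k] (r₁ * r₂)) =
      (ttMul k R S τ ∘ₗ TensorProduct.map (τ ∘ₗ TensorProduct.mk k S R s₁)
        (τ ∘ₗ (TensorProduct.mk k S R).flip r₂)) (τ (s₂ ⊗ₜ[k] r₁)) := by
  have h := LinearMap.ext_iff.mp hc ((s₁ ⊗ₜ[k] s₂) ⊗ₜ[k] (r₁ ⊗ₜ[k] r₂))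
  simp only [coe_comp, Function.comp_apply, map_tmul, mul'_apply] at h
  rw [h, twistRHS_eq]
  simp only [coe_comp, Function.comp_apply, LinearEquiv.coe_coe, assoc_tmul,
    lTensor_tmul, assoc_symm_tmul, rTensor_tmul]
  induction τ (s₂ ⊗ₜ[k] r₁) using TensorProduct.induction_on with
  | zero => simp
  | tmul a b => simp [mk_apply, flip_apply]
  | add x y hx hy => simp_all [tmul_add, add_tmul]

lemma ttMul_assoc_pure
    (h1 : ∀ r : R, τ ((1 : S) ⊗ₜ[k] r) = r ⊗ₜ[k] (1 : S))
    (h2 : ∀ s : S, τ (s ⊗ₜ[k] (1 : R)) = (1 : R) ⊗ₜ[k] s)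
    (hc : τ ∘ₗ TensorProduct.map (LinearMap.mul' k S) (LinearMap.mul' k R) = twistRHS k R S τ)
    (r r' r'' : R) (s s' s'' : S) :
    ttMul k R S τ ((ttMul k R S τ ((r ⊗ₜ[k] s) ⊗ₜ[k] (r' ⊗ₜ[k] s'))) ⊗ₜ[k] (r'' ⊗ₜ[k] s'')) =
    ttMul k R S τ ((r ⊗ₜ[k] s) ⊗ₜ[k] (ttMul k R S τ ((r' ⊗ₜ[k] s') ⊗ₜ[k] (r'' ⊗ₜ[k] s'')))) := by
  obtain ⟨T1, hT1⟩ := TensorProduct.exists_finset (τ (s ⊗ₜ[k] r'))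
  obtain ⟨T2, hT2⟩ := TensorProduct.exists_finset (τ (s' ⊗ₜ[k] r''))
  rw [ttMul_tmul k R S τ r r' s s', ttMul_tmul k R S τ r' r'' s' s'', hT1, hT2]
  simp only [map_sum, sum_tmul, tmul_sum, map_tmul, mulLeft_apply, mulRight_apply]
  have maps_eq : ∀ (a : R) (d : S) (x : R ⊗[k] S),
      TensorProduct.map (LinearMap.mulLeft k (r * a)) (LinearMap.mulRight k s'')
        (TensorProduct.map LinearMap.id (LinearMap.mulRight k d) x) =
      TensorProduct.map (LinearMap.mulLeft k r) (LinearMap.mulRight k (d * s''))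
        (TensorProduct.map (LinearMap.mulLeft k a) LinearMap.id x) := by
    intro a d x
    induction x using TensorProduct.induction_on with
    | zero => simp
    | tmul e f => simp [mulLeft_apply, mulRight_apply, mul_assoc]
    | add u v hu hv => simp_all
  have L : ∀ p ∈ T1, ttMul k R S τ (((r * p.1) ⊗ₜ[k] (p.2 * s')) ⊗ₜ[k] (r'' ⊗ₜ[k] s'')) =
      ∑ q ∈ T2, TensorProduct.map (LinearMap.mulLeft k r) (LinearMap.mulRight k (q.2 * s''))
        (TensorProduct.map (LinearMap.mulLeft k p.1) LinearMap.id (τ (p.2 ⊗ₜ[k] q.1))) := by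
    intro p _
    rw [ttMul_tmul]
    have hA := ctau k R S τ hc p.2 s' r'' 1
    rw [mul_one] at hA
    rw [hA, hT2]
    simp only [map_sum, coe_comp, Function.comp_apply, map_tmul, mk_apply, flip_apply, h2]
    refine Finset.sum_congr rfl fun q _ => ?_
    rw [ttMul_one_right k R S τ h2]
    exact maps_eq p.1 q.2 _
  have Rh : ∀ q ∈ T2, ttMul k R S τ ((r ⊗ₜ[k] s) ⊗ₜ[k] ((r' * q.1) ⊗ₜ[k] (q.2 * s''))) =
      ∑ p ∈ T1, TensorProduct.map (LinearMap.mulLeft k r) (LinearMap.mulRight k (q.2 * s''))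
        (TensorProduct.map (LinearMap.mulLeft k p.1) LinearMap.id (τ (p.2 ⊗ₜ[k] q.1))) := by
    intro q _
    rw [ttMul_tmul]
    have hB := ctau k R S τ hc 1 s r' q.1
    rw [one_mul] at hB
    rw [hB, hT1]
    simp only [map_sum, coe_comp, Function.comp_apply, map_tmul, mk_apply, flip_apply, h1]
    refine Finset.sum_congr rfl fun p _ => ?_
    rw [ttMul_one_left k R S τ h1]
  rw [Finset.sum_congr rfl L, Finset.sum_congr rfl Rh, Finset.sum_comm]

end TwistAux

set_option synthInstance.maxHeartbeats 1000000 in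
set_option maxHeartbeats 1000000 in
/-- if `τ` is a twisting map then the multiplication
`(m_R ⊗ m_S)(1 ⊗ τ ⊗ 1)` on `R ⊗ S` is associative with unit `1_R ⊗ 1_S`. -/
theorem ttMul_assoc_and_unital (τ : S ⊗[k] R →ₗ[k] R ⊗[k] S)
    (hτ : IsTwistingMap k R S τ) :
    (ttMul k R S τ ∘ₗ rTensor (R ⊗[k] S) (ttMul k R S τ) =
      ttMul k R S τ ∘ₗ lTensor (R ⊗[k] S) (ttMul k R S τ)
        ∘ₗ (TensorProduct.assoc k (R ⊗[k] S) (R ⊗[k] S) (R ⊗[k] S)).toLinearMap) ∧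
    (∀ x : R ⊗[k] S, ttMul k R S τ (((1 : R) ⊗ₜ[k] (1 : S)) ⊗ₜ[k] x) = x) ∧
    (∀ x : R ⊗[k] S, ttMul k R S τ (x ⊗ₜ[k] ((1 : R) ⊗ₜ[k] (1 : S))) = x) := by
  obtain ⟨hbij, h1, h2, hc⟩ := hτ
  refine ⟨?_, ?_, ?_⟩
  · apply TensorProduct.ext'
    intro w z
    induction w using TensorProduct.induction_on with
    | zero => simp
    | add u v hu hv => simp_all [add_tmul]
    | tmul x y =>
      induction x using TensorProduct.induction_on with
      | zero => simp [zero_tmul]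
      | add u v hu hv => simp_all [add_tmul]
      | tmul r s =>
        induction y using TensorProduct.induction_on with
        | zero => simp [tmul_zero, zero_tmul]
        | add u v hu hv => simp_all [tmul_add, add_tmul]
        | tmul r' s' =>
          induction z using TensorProduct.induction_on with
          | zero => simp [tmul_zero]
          | add u v hu hv => simp_all [tmul_add]
          | tmul r'' s'' =>
            simp only [coe_comp, Function.comp_apply, rTensor_tmul, lTensor_tmul,
              LinearEquiv.coe_coe, assoc_tmul]
            exact ttMul_assoc_pure k R S τ h1 h2 hc r r' r'' s s' s''
  · intro x
    rw [ttMul_one_left k R S τ h1 1 x]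
    simp
  · intro x
    rw [ttMul_one_right k R S τ h2 1 x]
    simp
end

section
/- Let ψ : P_• → P'_• be an injective chain map of bimodule resolutions of a k-algebra A lifting the identity on A. If the quotient P'_n / ψ(P_n) is projective as an A-bimodule for every n, then there exists a chain map ψ' : P'_• → P_• lifting the identity on A with ψ' ∘ ψ = 1_{P}. Moreover, if A is graded, P and P' are graded resolutions, and ψ is graded, then ψ' may be chosen graded. -/
/-!
The retraction is built degree by degree, the augmentation being the differential in degree `-1`.
Given a retraction `f` of `ψₙ` that is compatible with the differentials so far, a retraction `σ`
of `ψₙ₊₁` exists because its cokernel is projective. The defect `f ∘ d' - d ∘ σ` vanishes on the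
image of `ψₙ₊₁` and takes values in the boundaries, so it lifts through the differential along the
projective cokernel; correcting `σ` by this lift makes the square commute. Exactness of `P` and `P'`
then shows that the new retraction again maps boundaries to boundaries.
-/

open LinearMap

section

variable {R : Type*} [Ring R] {M M' X W : Type*} [AddCommGroup M] [AddCommGroup M']
  [AddCommGroup X] [AddCommGroup W] [Module R M] [Module R M'] [Module R X] [Module R W]

theorem LinearMap.exists_leftInverse_of_injective_of_projective_cokernel (f : M →ₗ[R] M')
    (hf : Function.Injective f) [Module.Projective R (M' ⧸ range f)] :
    ∃ σ : M' →ₗ[R] M, σ ∘ₗ f = LinearMap.id :=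
  ((Function.Exact.split_tfae f.exact_map_mkQ_range hf (Submodule.mkQ_surjective _)).out 0 1).mp
    (Module.projective_lifting_property _ _ (Submodule.mkQ_surjective _))

theorem Module.exists_comp_eq_of_range_le [Module.Projective R M] (g : M →ₗ[R] X)
    (e : W →ₗ[R] X) (h : range g ≤ range e) : ∃ l : M →ₗ[R] W, e ∘ₗ l = g := by
  obtain ⟨l, hl⟩ := Module.projective_lifting_property e.rangeRestrict
    (Submodule.inclusion h ∘ₗ g.rangeRestrict) e.surjective_rangeRestrict
  exact ⟨l, LinearMap.ext fun x => congr(($hl x : X))⟩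

theorem LinearMap.exists_comp_eq_and_comp_eq_zero (ψ : M →ₗ[R] M') (g : M' →ₗ[R] X)
    (e : W →ₗ[R] X) [Module.Projective R (M' ⧸ range ψ)] (hg : g ∘ₗ ψ = 0)
    (hr : range g ≤ range e) : ∃ h : M' →ₗ[R] W, e ∘ₗ h = g ∧ h ∘ₗ ψ = 0 := by
  set gbar := (range ψ).liftQ g (range_le_ker_iff.mpr hg)
  have hgbar : range gbar ≤ range e := by
    rw [Submodule.range_liftQ]
    exact hr
  obtain ⟨l, hl⟩ := Module.exists_comp_eq_of_range_le gbar e hgbar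
  refine ⟨l ∘ₗ (range ψ).mkQ, ?_, ?_⟩
  · rw [← comp_assoc, hl, Submodule.liftQ_mkQ]
  · rw [comp_assoc, range_mkQ_comp, comp_zero]

end

section

variable {R : Type*} [Ring R] {M₀ M₁ M₀' M₁' : Type*} [AddCommGroup M₀] [AddCommGroup M₁]
  [AddCommGroup M₀'] [AddCommGroup M₁'] [Module R M₀] [Module R M₁] [Module R M₀'] [Module R M₁']

theorem exists_retraction_comp_eq_comp (d : M₁ →ₗ[R] M₀) (d' : M₁' →ₗ[R] M₀')
    (ψ₀ : M₀ →ₗ[R] M₀') (ψ₁ : M₁ →ₗ[R] M₁') (hψ : ψ₀ ∘ₗ d = d' ∘ₗ ψ₁)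
    (hψ₁ : Function.Injective ψ₁) [hQ : Module.Projective R (M₁' ⧸ range ψ₁)]
    (f : M₀' →ₗ[R] M₀) (hf : f ∘ₗ ψ₀ = LinearMap.id) (hfr : range (f ∘ₗ d') ≤ range d) :
    ∃ g : M₁' →ₗ[R] M₁, g ∘ₗ ψ₁ = LinearMap.id ∧ d ∘ₗ g = f ∘ₗ d' := by
  obtain ⟨σ, hσ⟩ := ψ₁.exists_leftInverse_of_injective_of_projective_cokernel hψ₁
  have hdefect : (f ∘ₗ d' - d ∘ₗ σ) ∘ₗ ψ₁ = 0 := by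
    rw [sub_comp, comp_assoc, ← hψ, ← comp_assoc, hf, comp_assoc, hσ, id_comp, comp_id, sub_self]
  have hdefect_range : range (f ∘ₗ d' - d ∘ₗ σ) ≤ range d := by
    rintro _ ⟨x, rfl⟩
    exact sub_mem (hfr ⟨x, rfl⟩) ⟨σ x, rfl⟩
  obtain ⟨h, hdh, hhψ⟩ := ψ₁.exists_comp_eq_and_comp_eq_zero _ d hdefect hdefect_range
  refine ⟨σ + h, ?_, ?_⟩
  · rw [add_comp, hσ, hhψ, add_zero]
  · rw [comp_add, hdh, add_sub_cancel]

end

theorem range_comp_le_range_of_exact {R : Type*} [Ring R] {M₀ M₁ M₂ M₀' M₁' M₂' : Type*}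
    [AddCommGroup M₀] [AddCommGroup M₁] [AddCommGroup M₂] [AddCommGroup M₀'] [AddCommGroup M₁']
    [AddCommGroup M₂'] [Module R M₀] [Module R M₁] [Module R M₂] [Module R M₀'] [Module R M₁']
    [Module R M₂'] {d₁ : M₁ →ₗ[R] M₀} {d₂ : M₂ →ₗ[R] M₁} {d₁' : M₁' →ₗ[R] M₀'}
    {d₂' : M₂' →ₗ[R] M₁'} {f : M₀' →ₗ[R] M₀} {g : M₁' →ₗ[R] M₁} (hg : d₁ ∘ₗ g = f ∘ₗ d₁')
    (hd' : d₁' ∘ₗ d₂' = 0) (hd : range d₂ = ker d₁) : range (g ∘ₗ d₂') ≤ range d₂ := by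
  rw [hd, range_le_ker_iff, ← comp_assoc, hg, comp_assoc, hd', comp_zero]

theorem exists_seq_of_forall_exists_succ {α : ℕ → Sort*} (p : ∀ n, α n → Prop)
    (r : ∀ n, α n → α (n + 1) → Prop) (a₀ : α 0) (h₀ : p 0 a₀)
    (step : ∀ n a, p n a → ∃ b, p (n + 1) b ∧ r n a b) :
    ∃ s : ∀ n, α n, s 0 = a₀ ∧ ∀ n, p n (s n) ∧ r n (s n) (s (n + 1)) := by
  choose next hnext using step
  let t : ∀ n, {a : α n // p n a} := fun n =>
    Nat.rec ⟨a₀, h₀⟩ (fun n a => ⟨next n a.1 a.2, (hnext n a.1 a.2).1⟩) n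
  exact ⟨fun n => (t n).1, rfl, fun n => ⟨(t n).2, (hnext n _ _).2⟩⟩

theorem bootstrap_splitting_general
    (B : Type) [Ring B] (N : Type) [AddCommGroup N] [Module B N]
    (P P' : ℕ → ModuleCat B)
    (dP : ∀ n, ↥(P (n+1)) →ₗ[B] ↥(P n))
    (dP' : ∀ n, ↥(P' (n+1)) →ₗ[B] ↥(P' n))
    (εP : ↥(P 0) →ₗ[B] N) (εP' : ↥(P' 0) →ₗ[B] N)
    -- `P` is a resolution of `N`:
    (hPsurj : Function.Surjective εP)
    (hP0 : LinearMap.range (dP 0) = LinearMap.ker εP)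
    (hP : ∀ n, LinearMap.range (dP (n+1)) = LinearMap.ker (dP n))
    -- `P'` is a resolution of `N`:
    (hP'0 : LinearMap.range (dP' 0) = LinearMap.ker εP')
    (hP' : ∀ n, LinearMap.range (dP' (n+1)) = LinearMap.ker (dP' n))
    -- `ψ` is an injective chain map lifting the identity on `N`:
    (ψ : ∀ n, ↥(P n) →ₗ[B] ↥(P' n))
    (hψchain : ∀ n, ψ n ∘ₗ dP n = dP' n ∘ₗ ψ (n+1))
    (hψlift : εP' ∘ₗ ψ 0 = εP)
    (hψinj : ∀ n, Function.Injective (ψ n))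
    -- each quotient `P'_n / ψ(P_n)` is projective:
    (hproj : ∀ n, Module.Projective B (↥(P' n) ⧸ LinearMap.range (ψ n))) :
    ∃ ψ' : ∀ n, ↥(P' n) →ₗ[B] ↥(P n),
      (∀ n, ψ' n ∘ₗ dP' n = dP n ∘ₗ ψ' (n+1)) ∧
      εP ∘ₗ ψ' 0 = εP' ∧
      (∀ n, ψ' n ∘ₗ ψ n = LinearMap.id) := by
  have hεP : range (LinearMap.id ∘ₗ εP') ≤ range εP := by simp [range_eq_top.mpr hPsurj]
  obtain ⟨f₀, hf₀ψ, hf₀ε⟩ := exists_retraction_comp_eq_comp (hQ := hproj 0) εP εP' LinearMap.id (ψ 0)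
    (by rw [id_comp, hψlift]) (hψinj 0) LinearMap.id (comp_id _) hεP
  obtain ⟨ψ', hψ'0, hψ'⟩ := exists_seq_of_forall_exists_succ
    (fun n (f : P' n →ₗ[B] P n) => f ∘ₗ ψ n = LinearMap.id ∧ range (f ∘ₗ dP' n) ≤ range (dP n))
    (fun n f g => dP n ∘ₗ g = f ∘ₗ dP' n) f₀
    ⟨hf₀ψ, range_comp_le_range_of_exact hf₀ε (range_le_ker_iff.mp hP'0.le) hP0⟩
    fun n f ⟨hfψ, hfr⟩ => by
      obtain ⟨g, hgψ, hg⟩ := exists_retraction_comp_eq_comp (hQ := hproj (n + 1)) (dP n)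
        (dP' n) (ψ n) (ψ (n + 1)) (hψchain n) (hψinj (n + 1)) f hfψ hfr
      exact ⟨g, ⟨hgψ, range_comp_le_range_of_exact hg (range_le_ker_iff.mp (hP' n).le) (hP n)⟩, hg⟩
  refine ⟨ψ', fun n => (hψ' n).2.symm, ?_, fun n => (hψ' n).1.1⟩
  rw [hψ'0, hf₀ε, id_comp]

/-- if `ψ : P → P'` is an injective chain map of resolutions of `N`
lifting the identity on `N`, and each quotient `P'_n / ψ(P_n)` is projective,
then there is a chain map `ψ' : P' → P` lifting the identity with `ψ' ∘ ψ = 1`. -/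
theorem bootstrap_splitting
    (B : Type) [Ring B] (N : Type) [AddCommGroup N] [Module B N]
    (P P' : ℕ → ModuleCat B)
    (dP : ∀ n, ↥(P (n+1)) →ₗ[B] ↥(P n))
    (dP' : ∀ n, ↥(P' (n+1)) →ₗ[B] ↥(P' n))
    (εP : ↥(P 0) →ₗ[B] N) (εP' : ↥(P' 0) →ₗ[B] N)
    -- `P` is a resolution of `N`:
    (hPsurj : Function.Surjective εP)
    (hP0 : LinearMap.range (dP 0) = LinearMap.ker εP)
    (hP : ∀ n, LinearMap.range (dP (n+1)) = LinearMap.ker (dP n))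
    -- `P'` is a resolution of `N`:
    (hP'surj : Function.Surjective εP')
    (hP'0 : LinearMap.range (dP' 0) = LinearMap.ker εP')
    (hP' : ∀ n, LinearMap.range (dP' (n+1)) = LinearMap.ker (dP' n))
    -- `ψ` is an injective chain map lifting the identity on `N`:
    (ψ : ∀ n, ↥(P n) →ₗ[B] ↥(P' n))
    (hψchain : ∀ n, ψ n ∘ₗ dP n = dP' n ∘ₗ ψ (n+1))
    (hψlift : εP' ∘ₗ ψ 0 = εP)
    (hψinj : ∀ n, Function.Injective (ψ n))
    -- each quotient `P'_n / ψ(P_n)` is projective: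
    (hproj : ∀ n, Module.Projective B (↥(P' n) ⧸ LinearMap.range (ψ n))) :
    ∃ ψ' : ∀ n, ↥(P' n) →ₗ[B] ↥(P n),
      (∀ n, ψ' n ∘ₗ dP' n = dP n ∘ₗ ψ' (n+1)) ∧
      εP ∘ₗ ψ' 0 = εP' ∧
      (∀ n, ψ' n ∘ₗ ψ n = LinearMap.id) :=
  bootstrap_splitting_general B N P P' dP dP' εP εP' hPsurj hP0 hP hP'0 hP' ψ hψchain hψlift hψinj
    hproj
end
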